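/- arXiv:1612.04794 — 2 statements merged into one kernel-verified Lean document; each statement's English description precedes it below -/
import Mathlib

section
/- (Combinatorial content of the Both k-near Editing theorem.) Fix initial bijections α₀ : S → {1,…,|S|} and β₀ : Q → {1,…,|Q|} and k ∈ ℕ. The minimum cardinality of an edit set F ⊆ S × Q such that the edited graph (S ∪ Q, E △ F) admits a k-near nested ordering π of the students and a k-near ordering σ of the questions satisfying the interval property equals the minimum, over all k-near bijections π : S → {1,…,|S|}, all k-near bijections σ : Q → {1,…,|Q|}, and all nondecreasing threshold sequences 0 ≤ j₁ ≤ … ≤ j_{|S|} ≤ |Q|, of the sum over i = 1,…,|S| of |N(π⁻¹(i)) △ {σ⁻¹(1),…,σ⁻¹(j_i)}|. -/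
open Finset

/-- The neighborhood of a student `s` in the bipartite graph with edge set `E`. -/
def nbhd {S Q : Type*} [Fintype Q] [DecidableEq S] [DecidableEq Q]
    (E : Finset (S × Q)) (s : S) : Finset Q :=
  Finset.univ.filter fun q => (s, q) ∈ E

/-- The `j` easiest questions under the ordering `σ` (`j ∈ {0, …, |Q|}`). -/
def prefixSet {Q : Type*} [Fintype Q] [DecidableEq Q]
    (σ : Q ≃ Fin (Fintype.card Q)) (j : ℕ) : Finset Q :=
  Finset.univ.filter fun q => (σ q : ℕ) < j

/-- `π` is a `k`-near ordering with respect to the initial ordering `α₀`. -/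
def kNear {X : Type*} [Fintype X] (α₀ π : X ≃ Fin (Fintype.card X)) (k : ℕ) : Prop :=
  ∀ x : X, ((π x : ℤ) - (α₀ x : ℤ)).natAbs ≤ k

/-!
An edit set decomposes into its rows `nbhd F s`, and the edited row of `s` is
`nbhd E s ∆ nbhd F s`; so choosing `F` is the same as choosing the edited rows, at cost
`∑ s, |nbhd E s ∆ (edited row of s)|`. The interval property says that every edited row is a
prefix `prefixSet σ j`, and for prefixes nestedness along `π` is monotonicity of the thresholds.
-/

section Edits

variable {S Q : Type*} [Fintype Q] [DecidableEq S] [DecidableEq Q]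

lemma nbhd_symmDiff (E F : Finset (S × Q)) (s : S) :
    nbhd (symmDiff E F) s = symmDiff (nbhd E s) (nbhd F s) := by
  ext q
  simp only [nbhd, mem_filter, mem_univ, true_and, mem_symmDiff]

variable [Fintype S]

lemma nbhd_filter_mem (A : S → Finset Q) (s : S) :
    nbhd (univ.filter fun p : S × Q => p.2 ∈ A p.1) s = A s := by
  ext q
  simp [nbhd]

lemma card_eq_sum_card_nbhd (F : Finset (S × Q)) : F.card = ∑ s, (nbhd F s).card := by
  simp only [nbhd, card_filter, ← Fintype.sum_prod_type']
  simp

lemma exists_nbhd_symmDiff_eq (E : Finset (S × Q)) (T : S → Finset Q) :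
    ∃ F : Finset (S × Q), ∀ s, nbhd (symmDiff E F) s = T s :=
  ⟨univ.filter fun p => p.2 ∈ symmDiff (nbhd E p.1) (T p.1), fun s => by
    rw [nbhd_symmDiff, nbhd_filter_mem (fun s => symmDiff (nbhd E s) (T s)),
      symmDiff_symmDiff_cancel_left]⟩

lemma card_eq_sum_card_symmDiff_nbhd (E F : Finset (S × Q)) :
    F.card = ∑ s, (symmDiff (nbhd E s) (nbhd (symmDiff E F) s)).card := by
  simp only [card_eq_sum_card_nbhd F, nbhd_symmDiff, symmDiff_symmDiff_cancel_left]

end Edits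

section Prefixes

variable {Q : Type*} [Fintype Q] [DecidableEq Q]

lemma prefixSet_subset_prefixSet_iff (σ : Q ≃ Fin (Fintype.card Q)) {a b : ℕ}
    (ha : a ≤ Fintype.card Q) : prefixSet σ a ⊆ prefixSet σ b ↔ a ≤ b := by
  refine ⟨fun h => ?_, fun hab q hq => ?_⟩
  · by_contra! hba
    have hq : σ.symm ⟨b, hba.trans_le ha⟩ ∈ prefixSet σ a := by simpa [prefixSet] using hba
    simpa [prefixSet] using h hq
  · simp only [prefixSet, mem_filter, mem_univ, true_and] at hq ⊢
    omega

variable {S : Type*} [Fintype S]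

lemma nested_prefixSet_iff_monotone (π : S ≃ Fin (Fintype.card S))
    (σ : Q ≃ Fin (Fintype.card Q)) {j : Fin (Fintype.card S) → ℕ}
    (hj : ∀ i, j i ≤ Fintype.card Q) :
    (∀ s₁ s₂ : S, π s₂ ≤ π s₁ → prefixSet σ (j (π s₂)) ⊆ prefixSet σ (j (π s₁))) ↔
      Monotone j := by
  simp only [prefixSet_subset_prefixSet_iff σ (hj _)]
  exact ⟨fun h i₁ i₂ h12 => by simpa using h (π.symm i₂) (π.symm i₁) (by simpa using h12),
    fun h s₁ s₂ h21 => h h21⟩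

lemma card_eq_sum_card_symmDiff_prefixSet [DecidableEq S] (E F : Finset (S × Q))
    (π : S ≃ Fin (Fintype.card S)) (σ : Q ≃ Fin (Fintype.card Q))
    (j : Fin (Fintype.card S) → ℕ) (hF : ∀ s, nbhd (symmDiff E F) s = prefixSet σ (j (π s))) :
    F.card = ∑ i, (symmDiff (nbhd E (π.symm i)) (prefixSet σ (j i))).card := by
  rw [card_eq_sum_card_symmDiff_nbhd E F, ← π.symm.sum_comp]
  simp [hF]

end Prefixes

/-- Combinatorial content of the Both `k`-near Editing theorem: the minimum number of edge
edits after which the graph admits a `k`-near nested student ordering and a `k`-near question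
ordering with the interval property equals the minimum over `k`-near `π`, `k`-near `σ`, and
nondecreasing threshold sequences of the total per-position editing cost. -/
theorem stmt10 {S Q : Type*} [Fintype S] [Fintype Q] [DecidableEq S] [DecidableEq Q]
    (E : Finset (S × Q)) (α₀ : S ≃ Fin (Fintype.card S))
    (β₀ : Q ≃ Fin (Fintype.card Q)) (k : ℕ) :
    sInf {c : ℕ | ∃ F : Finset (S × Q), F.card = c ∧
        ∃ π : S ≃ Fin (Fintype.card S), kNear α₀ π k ∧
        ∃ σ : Q ≃ Fin (Fintype.card Q), kNear β₀ σ k ∧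
          (∀ s₁ s₂ : S, π s₂ ≤ π s₁ →
            nbhd (symmDiff E F) s₂ ⊆ nbhd (symmDiff E F) s₁) ∧
          (∀ s : S, ∃ j ≤ Fintype.card Q, nbhd (symmDiff E F) s = prefixSet σ j)} =
    sInf {c : ℕ | ∃ π : S ≃ Fin (Fintype.card S), kNear α₀ π k ∧
        ∃ σ : Q ≃ Fin (Fintype.card Q), kNear β₀ σ k ∧
        ∃ j : Fin (Fintype.card S) → ℕ, Monotone j ∧ (∀ i, j i ≤ Fintype.card Q) ∧
          c = ∑ i : Fin (Fintype.card S),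
            (symmDiff (nbhd E (π.symm i)) (prefixSet σ (j i))).card} := by
  congr 1
  ext c
  constructor
  · rintro ⟨F, rfl, π, hπ, σ, hσ, hnested, hinterval⟩
    choose t ht hF using hinterval
    set j := fun i => t (π.symm i)
    have hF' : ∀ s, nbhd (symmDiff E F) s = prefixSet σ (j (π s)) := by simpa [j] using hF
    have hj : ∀ i, j i ≤ Fintype.card Q := fun i => ht _
    refine ⟨π, hπ, σ, hσ, j, ?_, hj, card_eq_sum_card_symmDiff_prefixSet E F π σ j hF'⟩
    rw [← nested_prefixSet_iff_monotone π σ hj]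
    simpa only [hF'] using hnested
  · rintro ⟨π, hπ, σ, hσ, j, hmono, hj, rfl⟩
    obtain ⟨F, hF⟩ := exists_nbhd_symmDiff_eq E fun s => prefixSet σ (j (π s))
    refine ⟨F, card_eq_sum_card_symmDiff_prefixSet E F π σ j hF, π, hπ, σ, hσ, ?_,
      fun s => ⟨_, hj _, hF s⟩⟩
    simpa only [hF] using (nested_prefixSet_iff_monotone π σ hj).2 hmono
end

section
/- (Combinatorial content of the Both k-near Addition theorem.) Fix initial bijections α₀ : S → {1,…,|S|} and β₀ : Q → {1,…,|Q|} and k ∈ ℕ. The minimum cardinality of an addition set F ⊆ (S × Q) \ E such that the graph (S ∪ Q, E ∪ F) admits a k-near nested ordering π of the students and a k-near ordering σ of the questions satisfying the interval property equals the minimum, over all k-near bijections π : S → {1,…,|S|}, all k-near bijections σ : Q → {1,…,|Q|}, and all nondecreasing threshold sequences 0 ≤ j₁ ≤ … ≤ j_{|S|} ≤ |Q| satisfying N(π⁻¹(i)) ⊆ {σ⁻¹(1),…,σ⁻¹(j_i)} for every i, of the sum over i = 1,…,|S| of |{σ⁻¹(1),…,σ⁻¹(j_i)} \ N(π⁻¹(i))|.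 -/
open Finset

lemma mem_prefixSet {Q : Type*} [Fintype Q] [DecidableEq Q]
    (σ : Q ≃ Fin (Fintype.card Q)) (j : ℕ) (q : Q) :
    q ∈ prefixSet σ j ↔ (σ q : ℕ) < j := by
  simp [prefixSet]

lemma prefixSet_mono {Q : Type*} [Fintype Q] [DecidableEq Q]
    (σ : Q ≃ Fin (Fintype.card Q)) {j j' : ℕ} (h : j ≤ j') :
    prefixSet σ j ⊆ prefixSet σ j' := by
  intro q hq
  rw [mem_prefixSet] at *
  omega

lemma prefixSet_card {Q : Type*} [Fintype Q] [DecidableEq Q]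
    (σ : Q ≃ Fin (Fintype.card Q)) {j : ℕ} (hj : j ≤ Fintype.card Q) :
    (prefixSet σ j).card = j := by
  conv_rhs => rw [← Finset.card_range j]
  apply Finset.card_bij' (fun q _ => (σ q : ℕ))
    (fun m hm => σ.symm ⟨m, lt_of_lt_of_le (Finset.mem_range.mp hm) hj⟩)
  case hi =>
    intro q hq
    rw [mem_prefixSet] at hq
    simpa using hq
  case hj =>
    intro m hm
    simp [mem_prefixSet, Finset.mem_range.mp hm]
  case left_inv => intro q hq; simp
  case right_inv => intro m hm; simp

lemma nbhd_union {S Q : Type*} [Fintype Q] [DecidableEq S] [DecidableEq Q]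
    (E F : Finset (S × Q)) (s : S) :
    nbhd (E ∪ F) s = nbhd E s ∪ nbhd F s := by
  ext q; simp [nbhd]

lemma card_eq_sum_nbhd {S Q : Type*} [Fintype S] [Fintype Q] [DecidableEq S] [DecidableEq Q]
    (F : Finset (S × Q)) :
    F.card = ∑ s : S, (nbhd F s).card := by
  rw [Finset.card_eq_sum_card_fiberwise (f := Prod.fst) (t := Finset.univ)
    (fun p _ => Finset.mem_univ _)]
  refine Finset.sum_congr rfl fun s _ => ?_
  apply Finset.card_bij' (fun p _ => p.2) (fun q _ => (s, q))
  case hi =>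
    intro p hp
    simp only [Finset.mem_filter] at hp
    obtain ⟨hp1, hp2⟩ := hp
    simp only [nbhd, Finset.mem_filter, Finset.mem_univ, true_and]
    rwa [← hp2, Prod.mk.eta]
  case hj =>
    intro q hq
    simp only [nbhd, Finset.mem_filter, Finset.mem_univ, true_and] at hq
    simp [hq]
  case left_inv =>
    intro p hp
    simp only [Finset.mem_filter] at hp
    rw [← hp.2]
  case right_inv => intro q hq; rfl

/-- Combinatorial content of the Both `k`-near Addition theorem: the minimum number of edge
additions after which the graph admits a `k`-near nested student ordering and a `k`-near
question ordering with the interval property equals the minimum over `k`-near `π`, `k`-near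
`σ`, and nondecreasing threshold sequences dominating the existing neighborhoods of the
total per-position addition cost. -/
theorem stmt11 {S Q : Type*} [Fintype S] [Fintype Q] [DecidableEq S] [DecidableEq Q]
    (E : Finset (S × Q)) (α₀ : S ≃ Fin (Fintype.card S))
    (β₀ : Q ≃ Fin (Fintype.card Q)) (k : ℕ) :
    sInf {c : ℕ | ∃ F : Finset (S × Q), Disjoint F E ∧ F.card = c ∧
        ∃ π : S ≃ Fin (Fintype.card S), kNear α₀ π k ∧
        ∃ σ : Q ≃ Fin (Fintype.card Q), kNear β₀ σ k ∧
          (∀ s₁ s₂ : S, π s₂ ≤ π s₁ → nbhd (E ∪ F) s₂ ⊆ nbhd (E ∪ F) s₁) ∧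
          (∀ s : S, ∃ j ≤ Fintype.card Q, nbhd (E ∪ F) s = prefixSet σ j)} =
    sInf {c : ℕ | ∃ π : S ≃ Fin (Fintype.card S), kNear α₀ π k ∧
        ∃ σ : Q ≃ Fin (Fintype.card Q), kNear β₀ σ k ∧
        ∃ j : Fin (Fintype.card S) → ℕ, Monotone j ∧ (∀ i, j i ≤ Fintype.card Q) ∧
          (∀ i, nbhd E (π.symm i) ⊆ prefixSet σ (j i)) ∧
          c = ∑ i : Fin (Fintype.card S),
            (prefixSet σ (j i) \ nbhd E (π.symm i)).card} := by
  congr 1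
  ext c
  simp only [Set.mem_setOf_eq]
  constructor
  · rintro ⟨F, hdisj, hcard, π, hπ, σ, hσ, hnested, hinterval⟩
    refine ⟨π, hπ, σ, hσ, fun i => (nbhd (E ∪ F) (π.symm i)).card, ?_, ?_, ?_, ?_⟩
    · -- key: nbhd (E ∪ F) (π.symm i) = prefixSet σ (card ...)
      intro i i' hii'
      exact Finset.card_le_card (hnested _ _ (by simpa using hii'))
    · intro i
      simpa using Finset.card_le_card (Finset.subset_univ (nbhd (E ∪ F) (π.symm i)))
    · intro i
      have key : nbhd (E ∪ F) (π.symm i) =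
          prefixSet σ ((nbhd (E ∪ F) (π.symm i)).card) := by
        obtain ⟨m, hm, heq⟩ := hinterval (π.symm i)
        rw [heq, prefixSet_card σ hm]
      rw [← key, nbhd_union]
      exact Finset.subset_union_left
    · have key : ∀ s : S, nbhd (E ∪ F) s = prefixSet σ ((nbhd (E ∪ F) s).card) := by
        intro s
        obtain ⟨m, hm, heq⟩ := hinterval s
        rw [heq, prefixSet_card σ hm]
      have hterm : ∀ s : S, (prefixSet σ ((nbhd (E ∪ F) s).card) \ nbhd E s).card
          = (nbhd F s).card := by
        intro s
        rw [← key s, nbhd_union, Finset.union_sdiff_left]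
        congr 1
        rw [Finset.sdiff_eq_self_iff_disjoint]
        rw [Finset.disjoint_left]
        intro q hqF hqE
        simp only [nbhd, Finset.mem_filter, Finset.mem_univ, true_and] at hqF hqE
        exact (Finset.disjoint_left.mp hdisj hqF) hqE
      calc c = F.card := hcard.symm
        _ = ∑ s : S, (nbhd F s).card := card_eq_sum_nbhd F
        _ = ∑ i : Fin (Fintype.card S), (nbhd F (π.symm i)).card :=
            (Equiv.sum_comp π.symm (fun s => (nbhd F s).card)).symm
        _ = _ := by
            refine Finset.sum_congr rfl fun i _ => ?_
            exact (hterm (π.symm i)).symm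
  · rintro ⟨π, hπ, σ, hσ, j, hjmono, hjle, hjsub, hc⟩
    set F : Finset (S × Q) := Finset.univ.filter
      (fun p : S × Q => p.2 ∈ prefixSet σ (j (π p.1)) \ nbhd E p.1) with hFdef
    have hnF : ∀ s : S, nbhd F s = prefixSet σ (j (π s)) \ nbhd E s := by
      intro s; ext q; simp [nbhd, hFdef]
    have hnEF : ∀ s : S, nbhd (E ∪ F) s = prefixSet σ (j (π s)) := by
      intro s
      rw [nbhd_union, hnF s]
      apply Finset.union_sdiff_of_subset
      have := hjsub (π s)
      rwa [Equiv.symm_apply_apply] at this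
    refine ⟨F, ?_, ?_, π, hπ, σ, hσ, ?_, ?_⟩
    · rw [Finset.disjoint_left]
      rintro ⟨s, q⟩ hF hE
      simp only [hFdef, Finset.mem_filter, Finset.mem_sdiff] at hF
      exact hF.2.2 (by simp [nbhd, hE])
    · rw [card_eq_sum_nbhd]
      rw [hc, ← Equiv.sum_comp π.symm (fun s => (nbhd F s).card)]
      refine Finset.sum_congr rfl fun i _ => ?_
      rw [hnF (π.symm i), Equiv.apply_symm_apply]
    · intro s₁ s₂ h12
      rw [hnEF s₁, hnEF s₂]
      exact prefixSet_mono σ (hjmono h12)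
    · intro s
      exact ⟨j (π s), hjle (π s), hnEF s⟩
end
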